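/- Let α: ℝ³ → 𝔰𝔩(4,ℝ) be the map with α(x₁,x₂,x₃) having rows (0,x₁,0,0), (x₁,0,0,0), (x₂,−x₂,−x₁,0), (x₃,x₃,−x₁,x₁). Then the two-dimensional subspace 𝔥 = span{E₄₁, E₄₂} of 𝔰𝔩(4,ℝ) is an abelian Lie subalgebra that contains the curvature value [α(x),α(y)] − α([x,y]) for all x,y (where the bracket on ℝ³ is the Heisenberg bracket with [X₁,X₂]=−X₃), and 𝔥 is invariant under ad(α(x)) for every x ∈ ℝ³; explicitly [α(x),E₄₂] = x₁(E₄₂ − E₄₁) and [α(x),E₄₁] = x₁(E₄₁ − E₄₂). -/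

import Mathlib

/-! 𝔥 is spanned by elementary matrices `E₄ⱼ` with `j ≠ 4`, whose pairwise products vanish, so
𝔥 is a square-zero, hence abelian, space of trace-free matrices. The last column of `α(x)` is
`x₁ e₄` and its first two rows are `x₁ e₂ᵀ` and `x₁ e₁ᵀ`, which gives the two bracket formulas,
and a direct computation shows the curvature to be `2 (x₁ y₂ − x₂ y₁) E₄₂`. -/

open Matrix

noncomputable section

/-- The Heisenberg bracket with [X₁,X₂] = −X₃. -/
def heisBr (x y : Fin 3 → ℝ) : Fin 3 → ℝ := ![0, 0, -(x 0 * y 1 - x 1 * y 0)]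

/-- The extension α : 𝔨 → 𝔰𝔩(4,ℝ). -/
def αH (x : Fin 3 → ℝ) : Matrix (Fin 4) (Fin 4) ℝ :=
  !![0, x 0, 0, 0;
     x 0, 0, 0, 0;
     x 1, -(x 1), -(x 0), 0;
     x 2, x 2, -(x 0), x 0]

/-- The elementary matrix E₄₁. -/
def E41 : Matrix (Fin 4) (Fin 4) ℝ := Matrix.single 3 0 1

/-- The elementary matrix E₄₂. -/
def E42 : Matrix (Fin 4) (Fin 4) ℝ := Matrix.single 3 1 1

/-- The span 𝔥 = ⟨E₄₁, E₄₂⟩. -/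
def hol : Submodule ℝ (Matrix (Fin 4) (Fin 4) ℝ) := Submodule.span ℝ {E41, E42}

open scoped Pointwise in
theorem Submodule.mul_eq_zero_of_mem_span {R A : Type*} [CommSemiring R] [Semiring A]
    [Algebra R A] {s : Set A} (hs : ∀ a ∈ s, ∀ b ∈ s, a * b = 0) {u v : A}
    (hu : u ∈ span R s) (hv : v ∈ span R s) : u * v = 0 := by
  have hspan : span R (s * s) = ⊥ := by
    rw [span_eq_bot]
    rintro _ ⟨a, ha, b, hb, rfl⟩
    exact hs a ha b hb
  have huv : u * v ∈ span R (s * s) := span_mul_span R s s ▸ mul_mem_mul hu hv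
  rwa [hspan, mem_bot] at huv

lemma mul_eq_zero_of_mem_hol {u v : Matrix (Fin 4) (Fin 4) ℝ} (hu : u ∈ hol) (hv : v ∈ hol) :
    u * v = 0 :=
  Submodule.mul_eq_zero_of_mem_span
    (by rintro _ (rfl | rfl) _ (rfl | rfl) <;> simp [E41, E42]) hu hv

lemma trace_eq_zero_of_mem_hol {u : Matrix (Fin 4) (Fin 4) ℝ} (hu : u ∈ hol) : u.trace = 0 := by
  have hker : hol ≤ LinearMap.ker (traceLinearMap (Fin 4) ℝ ℝ) := by
    rw [hol, Submodule.span_le]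
    rintro _ (rfl | rfl) <;> simp [E41, E42, trace_single_eq_of_ne]
  exact hker hu

lemma curvature_eq (x y : Fin 3 → ℝ) :
    αH x * αH y - αH y * αH x - αH (heisBr x y) = (2 * (x 0 * y 1 - x 1 * y 0)) • E42 := by
  ext i j
  fin_cases i <;> fin_cases j <;>
    simp [E42, αH, heisBr, single] <;> ring

lemma αH_mul_single_three (x : Fin 3 → ℝ) (j : Fin 4) (c : ℝ) :
    αH x * single 3 j c = x 0 • single 3 j c := by
  ext i k
  by_cases hk : k = j
  · subst hk
    fin_cases i <;> simp [αH]
  · simp [mul_single_apply_of_ne (hbj := hk), Ne.symm hk]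

lemma E41_mul_αH (x : Fin 3 → ℝ) : E41 * αH x = x 0 • E42 := by
  ext i k
  fin_cases i <;> fin_cases k <;> simp [E41, E42, αH, single, mul_apply]

lemma E42_mul_αH (x : Fin 3 → ℝ) : E42 * αH x = x 0 • E41 := by
  ext i k
  fin_cases i <;> fin_cases k <;> simp [E41, E42, αH, single, mul_apply]

lemma αH_mul_E42_sub (x : Fin 3 → ℝ) : αH x * E42 - E42 * αH x = (x 0) • (E42 - E41) := by
  rw [E42_mul_αH, E42, αH_mul_single_three, smul_sub]

lemma αH_mul_E41_sub (x : Fin 3 → ℝ) : αH x * E41 - E41 * αH x = (x 0) • (E41 - E42) := by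
  rw [E41_mul_αH, E41, αH_mul_single_three, smul_sub]

theorem stmt16 :
    -- 𝔥 is abelian (under the commutator bracket)
    (∀ u ∈ hol, ∀ v ∈ hol, u * v - v * u = 0) ∧
    -- 𝔥 consists of trace-free matrices, i.e. lies in 𝔰𝔩(4,ℝ)
    (∀ u ∈ hol, u.trace = 0) ∧
    -- 𝔥 contains all curvature values
    (∀ x y : Fin 3 → ℝ, αH x * αH y - αH y * αH x - αH (heisBr x y) ∈ hol) ∧
    -- 𝔥 is invariant under ad(α(x)), with the explicit bracket formulas
    (∀ x : Fin 3 → ℝ, αH x * E42 - E42 * αH x = (x 0) • (E42 - E41)) ∧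
    (∀ x : Fin 3 → ℝ, αH x * E41 - E41 * αH x = (x 0) • (E41 - E42)) := by
  refine ⟨fun u hu v hv => ?_, fun u => trace_eq_zero_of_mem_hol, fun x y => ?_,
    αH_mul_E42_sub, αH_mul_E41_sub⟩
  · rw [mul_eq_zero_of_mem_hol hu hv, mul_eq_zero_of_mem_hol hv hu, sub_zero]
  · rw [curvature_eq]
    exact hol.smul_mem _ (Submodule.subset_span (by simp))
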